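/- Let T : A(X,E) → A(Y,F) be a surjective linear map that preserves common zeros, where A(X,E) and A(Y,F) are almost normally multiplicative vector subspaces of C(X,E) and C(Y,F). Suppose Z is a dense subset of βY and h : Z → X is a homeomorphism such that (Tf)^β(y) = (T𝐮)^β(y) for all y ∈ Z and f ∈ A(X,E), where u = f(h(y)). Then the map ι_X ∘ h : Z → βX admits a continuous extension h̃ : βY → βX. -/

import Mathlib

open Set Filter Topology

/-- The zero set of a function. -/
def zeroSet {α β : Type*} [Zero β] (f : α → β) : Set α := {x | f x = 0}

/-- A vector subspace `AX` of `C(X)` is almost normal if all its members are continuous and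
for every pair of subsets `P`, `Q` of `X` whose closures in the Stone–Čech compactification
`βX` are disjoint, there is `f ∈ AX` with `f = 0` on `P` and `f = 1` on `Q`. -/
def AlmostNormal (X : Type*) [TopologicalSpace X] (AX : Submodule ℝ (X → ℝ)) : Prop :=
  (∀ φ ∈ AX, Continuous φ) ∧
  ∀ P Q : Set X,
    Disjoint (closure (stoneCechUnit '' P)) (closure (stoneCechUnit '' Q)) →
      ∃ φ ∈ AX, (∀ x ∈ P, φ x = 0) ∧ (∀ x ∈ Q, φ x = 1)

/-- A vector subspace `AXE` of `C(X,E)` is almost normally multiplicative if all its members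
are continuous, it contains the constant functions, and there is an almost normal subspace
`AX` of `C(X)` such that `φ • f ∈ AXE` whenever `φ ∈ AX` and `f ∈ AXE`. -/
def AlmostNormallyMultiplicative (X E : Type*) [TopologicalSpace X] [TopologicalSpace E]
    [AddCommGroup E] [Module ℝ E] (AXE : Submodule ℝ (X → E)) : Prop :=
  (∀ f ∈ AXE, Continuous f) ∧
  (∀ u : E, (fun _ : X => u) ∈ AXE) ∧
  ∃ AX : Submodule ℝ (X → ℝ), AlmostNormal X AX ∧
    ∀ φ ∈ AX, ∀ f ∈ AXE, (fun x => φ x • f x) ∈ AXE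

/-- A map `T` between subspaces of `C(X,E)` and `C(Y,F)` preserves common zeros if for every
`k ∈ ℕ` and every finite family `f₁, …, f_k`, the zero sets of the `fᵢ` have a common point
iff the zero sets of the `T fᵢ` do. -/
def PreservesCommonZeros {X Y E F : Type*} [TopologicalSpace X] [TopologicalSpace Y]
    [AddCommGroup E] [Module ℝ E] [AddCommGroup F] [Module ℝ F]
    {AXE : Submodule ℝ (X → E)} {AYF : Submodule ℝ (Y → F)}
    (T : AXE → AYF) : Prop :=
  ∀ (k : ℕ) (f : Fin (k + 1) → AXE),
    (⋂ i, zeroSet ((f i : X → E))).Nonempty ↔ (⋂ i, zeroSet ((T (f i) : Y → F))).Nonempty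

/-- The set `Z_x ⊆ βY`: the intersection, over all `f` in the subspace vanishing at `x`, of the
closures in `βY` of the zero sets of `T f`. -/
def Zx {X Y E F : Type*} [TopologicalSpace X] [TopologicalSpace Y]
    [AddCommGroup E] [Module ℝ E] [AddCommGroup F] [Module ℝ F]
    {AXE : Submodule ℝ (X → E)} {AYF : Submodule ℝ (Y → F)}
    (T : AXE → AYF) (x : X) : Set (StoneCech Y) :=
  ⋂ (f : AXE) (_ : (f : X → E) x = 0), closure (stoneCechUnit '' zeroSet ((T f : Y → F)))


/-- The unique continuous extension `g^β : βY → βF` of a continuous map `g : Y → F`. -/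
noncomputable def betaExt {Y F : Type*} [TopologicalSpace Y] [TopologicalSpace F]
    {g : Y → F} (hg : Continuous g) : StoneCech Y → StoneCech F :=
  stoneCechExtend (continuous_stoneCechUnit.comp hg)

/-!
Fix `p ∈ βY`. If `ι_X ∘ h` had two distinct cluster points `c₁ ≠ c₂` as `y → p` in `Z`, take
neighbourhoods `U₁ ∋ c₁`, `U₂ ∋ c₂` in `βX` with disjoint closures and, by almost normality,
`φ ∈ A(X)` with `φ = 0` on `ι_X⁻¹ U₁` and `φ = 1` on `ι_X⁻¹ U₂`. By the formula for `(Tf)^β`,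
the value `(Tf)^β(p)` only depends on the values `f (h y)` for `y` near `p` on any subset of `Z`
accumulating at `p`. Comparing `f` with `φ • f` near `c₂` and `φ • f` with `0` near `c₁` gives
`(Tf)^β(p) = ι_F 0` for every `f`, which fails for a preimage of a nonzero constant under the
surjection `T`. So, `βX` being compact, `ι_X ∘ h` converges as `y → p` for every `p ∈ βY`, and
therefore extends continuously.
-/

lemma Dense.exists_continuous_extend_of_subsingleton_clusterPt {α β : Type*}
    [TopologicalSpace α] [TopologicalSpace β] [CompactSpace β] [T2Space β]
    {s : Set α} (hs : Dense s) {f : s → β} (hf : Continuous f)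
    (huniq : ∀ a, {b | ClusterPt b (map f (comap ((↑) : s → α) (𝓝 a)))}.Subsingleton) :
    ∃ g : α → β, Continuous g ∧ ∀ x : s, g x = f x := by
  have hlim : ∀ a, ∃ b, Tendsto f (comap ((↑) : s → α) (𝓝 a)) (𝓝 b) := by
    intro a
    have := hs.isDenseInducing_val.comap_nhds_neBot a
    obtain ⟨b, hb⟩ := exists_clusterPt_of_compactSpace (map f (comap ((↑) : s → α) (𝓝 a)))
    exact ⟨b, le_nhds_of_unique_clusterPt fun b' hb' => huniq a hb' hb⟩
  exact ⟨hs.extend f, hs.continuous_extend hlim, hs.extend_eq hf⟩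

lemma mem_closure_image_preimage_of_clusterPt {α β γ : Type*} [TopologicalSpace α]
    [TopologicalSpace β] {i : γ → α} {f : γ → β} {a : α} {b : β}
    (hb : ClusterPt b (map f (comap i (𝓝 a)))) {U : Set β} (hU : U ∈ 𝓝 b) :
    a ∈ closure (i '' (f ⁻¹' U)) := by
  have hfreq : ∃ᶠ c in comap i (𝓝 a), f c ∈ U := hb.frequently hU
  rw [frequently_comap] at hfreq
  exact mem_closure_iff_frequently.2 (hfreq.mono fun _ ⟨c, hc, hcU⟩ => ⟨c, hcU, hc⟩)

lemma IsTopologicalAddGroup.injective_stoneCechUnit {G : Type*} [AddCommGroup G]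
    [TopologicalSpace G] [IsTopologicalAddGroup G] [T0Space G] :
    Function.Injective (stoneCechUnit : G → StoneCech G) := by
  let _ := IsTopologicalAddGroup.rightUniformSpace G
  have : T35Space G := {}
  exact injective_stoneCechUnit_of_t35Space

lemma continuous_betaExt {Y F : Type*} [TopologicalSpace Y] [TopologicalSpace F]
    {g : Y → F} (hg : Continuous g) : Continuous (betaExt hg) :=
  continuous_stoneCechExtend _

lemma betaExt_eq_of_eq_const {Y F : Type*} [TopologicalSpace Y] [TopologicalSpace F]
    {g : Y → F} (hg : Continuous g) {w : F} (hgw : g = fun _ => w) (q : StoneCech Y) :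
    betaExt hg q = stoneCechUnit w := by
  subst hgw
  have hext : betaExt hg = fun _ => stoneCechUnit w :=
    denseRange_stoneCechUnit.equalizer (continuous_betaExt hg) continuous_const
      (funext (stoneCechExtend_stoneCechUnit (continuous_stoneCechUnit.comp hg)))
  exact congrFun hext q

section

variable {X Y E F : Type*} [TopologicalSpace Y] [AddCommGroup E] [Module ℝ E]
  [AddCommGroup F] [Module ℝ F] [TopologicalSpace F]
  {AXE : Submodule ℝ (X → E)} {AYF : Submodule ℝ (Y → F)}
  {hcont : ∀ g ∈ AYF, Continuous g} {hconst : ∀ u : E, (fun _ : X => u) ∈ AXE}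
  {T : AXE → AYF} {Z : Set (StoneCech Y)} {h : Z → X}

lemma betaExt_eq_of_mem_closure
    (hform : ∀ (y : Z) (f : AXE), betaExt (hcont _ (T f).2) (y : StoneCech Y) =
      betaExt (hcont _ (T ⟨fun _ => (f : X → E) (h y), hconst _⟩).2) (y : StoneCech Y))
    {f f' : AXE} {p : StoneCech Y}
    (hp : p ∈ closure
      (((↑) : Z → StoneCech Y) '' {z | (f : X → E) (h z) = (f' : X → E) (h z)})) :
    betaExt (hcont _ (T f).2) p = betaExt (hcont _ (T f').2) p := by
  refine Set.EqOn.closure ?_ (continuous_betaExt _) (continuous_betaExt _) hp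
  rintro _ ⟨z, hz : (f : X → E) (h z) = (f' : X → E) (h z), rfl⟩
  rw [hform z f, hform z f', hz]

lemma betaExt_eq_zero_of_clusterPt [TopologicalSpace X]
    (hform : ∀ (y : Z) (f : AXE), betaExt (hcont _ (T f).2) (y : StoneCech Y) =
      betaExt (hcont _ (T ⟨fun _ => (f : X → E) (h y), hconst _⟩).2) (y : StoneCech Y))
    (hT0 : T 0 = 0) {AX : Submodule ℝ (X → ℝ)} (hAX : AlmostNormal X AX)
    (hmul : ∀ φ ∈ AX, ∀ f ∈ AXE, (fun x => φ x • f x) ∈ AXE)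
    {p : StoneCech Y} {c₁ c₂ : StoneCech X} (hne : c₁ ≠ c₂)
    (hc₁ : ClusterPt c₁ (map (stoneCechUnit ∘ h) (comap (↑) (𝓝 p))))
    (hc₂ : ClusterPt c₂ (map (stoneCechUnit ∘ h) (comap (↑) (𝓝 p)))) (f : AXE) :
    betaExt (hcont _ (T f).2) p = stoneCechUnit 0 := by
  obtain ⟨U₁, hU₁, U₂, hU₂, hdisj⟩ := exists_nhds_disjoint_closure hne
  obtain ⟨φ, hφ, hφ0, hφ1⟩ := hAX.2 (stoneCechUnit ⁻¹' U₁) (stoneCechUnit ⁻¹' U₂)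
    (hdisj.mono (closure_mono (image_preimage_subset _ _))
      (closure_mono (image_preimage_subset _ _)))
  let φf : AXE := ⟨fun x => φ x • (f : X → E) x, hmul φ hφ f f.2⟩
  calc betaExt (hcont _ (T f).2) p = betaExt (hcont _ (T φf).2) p := by
        refine betaExt_eq_of_mem_closure hform (closure_mono (image_mono ?_)
          (mem_closure_image_preimage_of_clusterPt hc₂ hU₂))
        intro z hz
        simp [φf, hφ1 _ hz]
    _ = betaExt (hcont _ (T 0).2) p := by
        refine betaExt_eq_of_mem_closure hform (closure_mono (image_mono ?_)
          (mem_closure_image_preimage_of_clusterPt hc₁ hU₁))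
        intro z hz
        simp [φf, hφ0 _ hz]
    _ = stoneCechUnit 0 := betaExt_eq_of_eq_const _ (by rw [hT0]; rfl) p

end

theorem extension_of_h {X Y E F : Type*}
    [TopologicalSpace X]
    [TopologicalSpace Y]
    [AddCommGroup E] [Module ℝ E] [TopologicalSpace E]
    [AddCommGroup F] [Module ℝ F] [TopologicalSpace F] [IsTopologicalAddGroup F]
    [T2Space F] [Nontrivial F]
    {AXE : Submodule ℝ (X → E)} {AYF : Submodule ℝ (Y → F)}
    (hAXE : AlmostNormallyMultiplicative X E AXE)
    (hAYF : AlmostNormallyMultiplicative Y F AYF)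
    (T : AXE →ₗ[ℝ] AYF) (hTsurj : Function.Surjective T)
    (Z : Set (StoneCech Y)) (hZ : Dense Z) (h : Z ≃ₜ X)
    (hform : ∀ (y : Z) (f : AXE),
      betaExt (hAYF.1 _ (T f).2) (y : StoneCech Y) =
        betaExt (hAYF.1 _ (T ⟨fun _ => (f : X → E) (h y), hAXE.2.1 _⟩).2)
          (y : StoneCech Y)) :
    ∃ htilde : StoneCech Y → StoneCech X, Continuous htilde ∧
      ∀ y : Z, htilde (y : StoneCech Y) = stoneCechUnit (h y) := by
  obtain ⟨AX, hAX, hmul⟩ := hAXE.2.2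
  refine hZ.exists_continuous_extend_of_subsingleton_clusterPt
    (continuous_stoneCechUnit.comp h.continuous) fun p c₁ hc₁ c₂ hc₂ => ?_
  by_contra hne
  obtain ⟨v, hv⟩ := exists_ne (0 : F)
  obtain ⟨f, hf⟩ := hTsurj ⟨fun _ => v, hAYF.2.1 v⟩
  refine hv (IsTopologicalAddGroup.injective_stoneCechUnit ?_)
  rw [← betaExt_eq_of_eq_const (hAYF.1 _ (T f).2) (by rw [hf]) p]
  exact betaExt_eq_zero_of_clusterPt hform (map_zero T) hAX hmul hne hc₁ hc₂ f
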